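/- Let θ ∈ ℝ∖ℚ and let H := ℤ + θℤ ⊆ ℝ. Let G be the direct limit of the constant sequence of abelian groups G_n := H ⊕ H with connecting homomorphisms f : H ⊕ H → H ⊕ H given by f(x,y) = (x + y, x + y). Then G is isomorphic, as an abelian group, to the subgroup ℤ[1/2] + ℤ·(θ/2)·ℤ-span of ℝ, i.e. to {p/2^n + θ q/2^n : p, q ∈ ℤ, n ∈ ℕ} ⊆ ℝ. -/

import Mathlib

/-!
Send `(x, y)` in the `i`-th copy of `H × H` to `(x + y) / 2 ^ (i + 1)`. The doubling map
multiplies `x + y` by `2`, so these maps are compatible and induce a map from the direct limit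
to `{h / 2 ^ n : h ∈ H, n ∈ ℕ}`. It is onto, since `h / 2 ^ n` is the image of `(h, h)` at
level `n`, and one-to-one, since `x + y = 0` means that `(x, y)` already dies one step later.
For `H = ℤ + θℤ` the target is `{p / 2 ^ n + θ q / 2 ^ n}`.
-/

/-- The transition homomorphisms `G i →+ G j` (for `i ≤ j`) generated by a sequence of
homomorphisms `G n →+ G (n+1)`. -/
noncomputable def natTransMaps {G : ℕ → Type*} [∀ n, AddCommGroup (G n)]
    (f : ∀ n, G n →+ G (n + 1)) : ∀ i j : ℕ, i ≤ j → (G i →+ G j) :=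
  fun i _ h => Nat.leRecOn h (fun {m} g => (f m).comp g) (AddMonoidHom.id (G i))

/-- The connecting homomorphism `H ⊕ H →+ H ⊕ H`, `(x, y) ↦ (x + y, x + y)`. -/
def doublingHom (H : AddSubgroup ℝ) : ↥H × ↥H →+ ↥H × ↥H where
  toFun p := (p.1 + p.2, p.1 + p.2)
  map_zero' := by simp
  map_add' p q := by
    ext <;> simp <;> ring

section NatDirectLimit

variable {G : ℕ → Type*} [∀ n, AddCommGroup (G n)] (f : ∀ n, G n →+ G (n + 1))

lemma natTransMaps_self (i : ℕ) (h : i ≤ i) : natTransMaps f i i h = AddMonoidHom.id (G i) :=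
  Nat.leRecOn_self _

lemma natTransMaps_succ (i j : ℕ) (h : i ≤ j) (h' : i ≤ j + 1) :
    natTransMaps f i (j + 1) h' = (f j).comp (natTransMaps f i j h) :=
  Nat.leRecOn_succ h _

variable {M : Type*} [AddCommGroup M] {g : ∀ n, G n →+ M}

lemma apply_natTransMaps_of_succ (hg : ∀ n x, g (n + 1) (f n x) = g n x)
    (i j : ℕ) (hij : i ≤ j) (x : G i) : g j (natTransMaps f i j hij x) = g i x := by
  induction j, hij using Nat.le_induction with
  | base => rw [natTransMaps_self]; rfl
  | succ j hij ih => rw [natTransMaps_succ f i j hij, AddMonoidHom.comp_apply, hg, ih]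

variable (g) in
noncomputable def natDirectLimitLift (hg : ∀ n x, g (n + 1) (f n x) = g n x) :
    AddCommGroup.DirectLimit G (natTransMaps f) →+ M :=
  AddCommGroup.DirectLimit.lift G _ M g (apply_natTransMaps_of_succ f hg)

variable (hg : ∀ n x, g (n + 1) (f n x) = g n x)

@[simp]
lemma natDirectLimitLift_of (i : ℕ) (x : G i) :
    natDirectLimitLift f g hg (AddCommGroup.DirectLimit.of G _ i x) = g i x :=
  AddCommGroup.DirectLimit.lift_of ..

lemma natDirectLimitLift_injective (hker : ∀ n x, g n x = 0 → f n x = 0) :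
    Function.Injective (natDirectLimitLift f g hg) := by
  refine (injective_iff_map_eq_zero _).2 fun z hz => ?_
  induction z using AddCommGroup.DirectLimit.induction_on with
  | ih i x =>
    rw [natDirectLimitLift_of] at hz
    have hstep : natTransMaps f i (i + 1) i.le_succ x = 0 := by
      rw [natTransMaps_succ f i i le_rfl, natTransMaps_self]
      exact hker i x hz
    rw [← AddCommGroup.DirectLimit.of_f (hij := i.le_succ), hstep, map_zero]

lemma natDirectLimitLift_surjective (hrange : ∀ m, ∃ n x, g n x = m) :
    Function.Surjective (natDirectLimitLift f g hg) := fun m =>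
  let ⟨n, x, hx⟩ := hrange m
  ⟨AddCommGroup.DirectLimit.of G _ n x, by rw [natDirectLimitLift_of, hx]⟩

end NatDirectLimit

namespace AddSubgroup

def dyadicSaturation (H : AddSubgroup ℝ) : AddSubgroup ℝ where
  carrier := {z | ∃ h ∈ H, ∃ n : ℕ, z = h / 2 ^ n}
  zero_mem' := ⟨0, H.zero_mem, 0, by simp⟩
  add_mem' := by
    rintro _ _ ⟨h, hh, n, rfl⟩ ⟨k, hk, m, rfl⟩
    refine ⟨2 ^ m • h + 2 ^ n • k, H.add_mem (H.nsmul_mem hh _) (H.nsmul_mem hk _), n + m, ?_⟩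
    simp only [nsmul_eq_mul, Nat.cast_pow, Nat.cast_ofNat]
    field_simp
    ring
  neg_mem' := by
    rintro _ ⟨h, hh, n, rfl⟩
    exact ⟨-h, H.neg_mem hh, n, by ring⟩

lemma coe_dyadicSaturation_closure_pair (θ : ℝ) :
    ((closure {(1 : ℝ), θ}).dyadicSaturation : Set ℝ) =
      {x : ℝ | ∃ (p q : ℤ) (n : ℕ), x = (p : ℝ) / 2 ^ n + θ * q / 2 ^ n} := by
  ext x
  simp only [dyadicSaturation, coe_set_mk, Set.mem_ofPred_eq, mem_closure_pair, zsmul_eq_mul,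
    mul_one]
  constructor
  · rintro ⟨_, ⟨p, q, rfl⟩, n, rfl⟩
    exact ⟨p, q, n, by ring⟩
  · rintro ⟨p, q, n, rfl⟩
    exact ⟨p + q * θ, ⟨p, q, rfl⟩, n, by ring⟩

variable (H : AddSubgroup ℝ)

noncomputable def halvedSumHom (n : ℕ) : H × H →+ H.dyadicSaturation :=
  AddMonoidHom.codRestrict
    (AddMonoidHom.mk' (fun x => ((x.1 : ℝ) + x.2) / 2 ^ (n + 1)) fun x y => by
      simp only [Prod.fst_add, Prod.snd_add, coe_add]
      ring)
    H.dyadicSaturation fun x => ⟨x.1 + x.2, H.add_mem x.1.2 x.2.2, n + 1, rfl⟩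

@[simp]
lemma coe_halvedSumHom (n : ℕ) (x : H × H) :
    (H.halvedSumHom n x : ℝ) = ((x.1 : ℝ) + x.2) / 2 ^ (n + 1) :=
  rfl

lemma halvedSumHom_succ_doublingHom (n : ℕ) (x : H × H) :
    H.halvedSumHom (n + 1) (doublingHom H x) = H.halvedSumHom n x := by
  ext
  simp only [coe_halvedSumHom, doublingHom, AddMonoidHom.coe_mk, ZeroHom.coe_mk, coe_add]
  ring

lemma doublingHom_eq_zero_of_halvedSumHom_eq_zero (n : ℕ) (x : H × H)
    (hx : H.halvedSumHom n x = 0) : doublingHom H x = 0 := by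
  have hsum : x.1 + x.2 = 0 := Subtype.ext (by simpa using congrArg Subtype.val hx)
  simp [doublingHom, hsum]

lemma exists_halvedSumHom_eq (z : H.dyadicSaturation) : ∃ n x, H.halvedSumHom n x = z := by
  obtain ⟨_, h, hh, n, rfl⟩ := z
  refine ⟨n, (⟨h, hh⟩, ⟨h, hh⟩), Subtype.ext ?_⟩
  simp only [coe_halvedSumHom, pow_succ]
  field_simp
  ring

noncomputable def directLimitDoublingEquiv :
    AddCommGroup.DirectLimit (fun _ : ℕ => H × H) (natTransMaps fun _ => doublingHom H) ≃+
      H.dyadicSaturation :=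
  AddEquiv.ofBijective (natDirectLimitLift _ H.halvedSumHom H.halvedSumHom_succ_doublingHom)
    ⟨natDirectLimitLift_injective _ _ H.doublingHom_eq_zero_of_halvedSumHom_eq_zero,
      natDirectLimitLift_surjective _ _ H.exists_halvedSumHom_eq⟩

end AddSubgroup

theorem directLimit_doubling_iso_general (θ : ℝ) :
    ∃ H' : AddSubgroup ℝ,
      (H' : Set ℝ) =
        {x : ℝ | ∃ (p q : ℤ) (n : ℕ), x = (p : ℝ) / 2 ^ n + θ * q / 2 ^ n} ∧
      Nonempty
        (AddCommGroup.DirectLimit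
            (fun _ : ℕ => ↥(AddSubgroup.closure {(1 : ℝ), θ}) ×
              ↥(AddSubgroup.closure {(1 : ℝ), θ}))
            (natTransMaps fun _ => doublingHom (AddSubgroup.closure {(1 : ℝ), θ})) ≃+
          ↥H') :=
  ⟨_, AddSubgroup.coe_dyadicSaturation_closure_pair θ,
    ⟨(AddSubgroup.closure {(1 : ℝ), θ}).directLimitDoublingEquiv⟩⟩

/-- For irrational `θ` and `H := ℤ + θℤ ⊆ ℝ`, the direct limit of the
constant sequence `H ⊕ H` with connecting maps `(x,y) ↦ (x+y, x+y)` is isomorphic as an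
abelian group to `{p/2ⁿ + θq/2ⁿ : p, q ∈ ℤ, n ∈ ℕ} ⊆ ℝ`. -/
theorem directLimit_doubling_iso (θ : ℝ) (hθ : Irrational θ) :
    ∃ H' : AddSubgroup ℝ,
      (H' : Set ℝ) =
        {x : ℝ | ∃ (p q : ℤ) (n : ℕ), x = (p : ℝ) / 2 ^ n + θ * q / 2 ^ n} ∧
      Nonempty
        (AddCommGroup.DirectLimit
            (fun _ : ℕ => ↥(AddSubgroup.closure {(1 : ℝ), θ}) ×
              ↥(AddSubgroup.closure {(1 : ℝ), θ}))
            (natTransMaps fun _ => doublingHom (AddSubgroup.closure {(1 : ℝ), θ})) ≃+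
          ↥H') :=
  directLimit_doubling_iso_general θ
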